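/- For a natural number k and constants β, q, the function y(x) = c E_α(βx) + (q/(k+1)) x^{k+1} E_α(α^{k+1} β x) solves y'(x) = β y(αx) + q x^k E_α(β α^{k+1} x). -/

import Mathlib

/-- The exponent-like function `E_α`. -/
noncomputable def Ea (α : ℝ) (x : ℝ) : ℝ :=
  ∑' n : ℕ, α ^ (n * (n - 1) / 2) * x ^ n / (n.factorial : ℝ)

lemma Ea_term_norm_le (α : ℝ) (hα : 0 < α) (hα1 : α ≤ 1) (x : ℝ) (n : ℕ) :
    ‖α ^ (n * (n - 1) / 2) * x ^ n / (n.factorial : ℝ)‖ ≤ |x| ^ n / (n.factorial : ℝ) := by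
  have h1 : α ^ (n * (n - 1) / 2) ≤ 1 := pow_le_one₀ hα.le hα1
  have h2 : (0:ℝ) < n.factorial := by positivity
  rw [norm_div, norm_mul, norm_pow, norm_pow, Real.norm_eq_abs, Real.norm_eq_abs,
    Real.norm_eq_abs, abs_of_pos hα, abs_of_pos h2]
  calc α ^ (n * (n - 1) / 2) * |x| ^ n / (n.factorial : ℝ)
      ≤ 1 * |x| ^ n / (n.factorial : ℝ) := by gcongr
    _ = |x| ^ n / (n.factorial : ℝ) := by ring

lemma Ea_summable (α : ℝ) (hα : 0 < α) (hα1 : α ≤ 1) (x : ℝ) :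
    Summable (fun n : ℕ => α ^ (n * (n - 1) / 2) * x ^ n / (n.factorial : ℝ)) :=
  Summable.of_norm_bounded (Real.summable_pow_div_factorial |x|)
    (Ea_term_norm_le α hα hα1 x)

lemma deriv_term_bound (α R : ℝ) (hα : 0 < α) (hα1 : α ≤ 1) (y : ℝ) (hy0 : 0 ≤ R)
    (hyR : |y| ≤ R) (n : ℕ) :
    ‖α ^ (n * (n - 1) / 2) * ((n : ℝ) * y ^ (n - 1)) / (n.factorial : ℝ)‖
      ≤ (n : ℝ) * R ^ (n - 1) / (n.factorial : ℝ) := by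
  have h1 : α ^ (n * (n - 1) / 2) ≤ 1 := pow_le_one₀ hα.le hα1
  have h2 : (0:ℝ) < n.factorial := by positivity
  rw [Real.norm_eq_abs, abs_div, abs_mul, abs_mul, abs_pow, abs_pow, Nat.abs_cast,
    abs_of_pos h2, abs_of_pos hα]
  calc α ^ (n * (n - 1) / 2) * ((n : ℝ) * |y| ^ (n - 1)) / (n.factorial : ℝ)
      ≤ 1 * ((n : ℝ) * R ^ (n - 1)) / (n.factorial : ℝ) := by
        gcongr
        all_goals first | exact h1 | exact hyR | positivity | exact abs_nonneg y
    _ = (n : ℝ) * R ^ (n - 1) / (n.factorial : ℝ) := by ring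

lemma Ea_hasDerivAt (α : ℝ) (hα : 0 < α) (hα1 : α ≤ 1) (x : ℝ) :
    HasDerivAt (Ea α) (Ea α (α * x)) x := by
  set R : ℝ := |x| + 1 with hR
  have hRpos : 0 < R := by positivity
  have hxR : |x| < R := by simp [hR]
  set u : ℕ → ℝ := fun n => (n : ℝ) * R ^ (n - 1) / (n.factorial : ℝ) with hu
  have hu_sum : Summable u := by
    rw [← summable_nat_add_iff 1]
    have : (fun n : ℕ => u (n + 1)) = fun n : ℕ => R ^ n / (n.factorial : ℝ) := by
      funext n
      have hfac : ((n + 1).factorial : ℝ) = (n + 1) * (n.factorial : ℝ) := by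
        rw [Nat.factorial_succ]; push_cast; ring
      have hn : (0:ℝ) < n.factorial := by positivity
      simp only [hu, Nat.add_sub_cancel, hfac]
      push_cast
      field_simp
    rw [this]
    exact Real.summable_pow_div_factorial R
  -- the series of derivatives
  have key : HasDerivAt (fun z : ℝ => ∑' n : ℕ,
      α ^ (n * (n - 1) / 2) * z ^ n / (n.factorial : ℝ))
      (∑' n : ℕ, α ^ (n * (n - 1) / 2) * ((n : ℝ) * x ^ (n - 1)) / (n.factorial : ℝ)) x := by
    apply hasDerivAt_tsum_of_isPreconnected hu_sum (Metric.isOpen_ball (x := (0:ℝ)) (ε := R))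
      (convex_ball (0:ℝ) R).isPreconnected
      (g' := fun (n : ℕ) (y : ℝ) => α ^ (n * (n - 1) / 2) * ((n : ℝ) * y ^ (n - 1)) / (n.factorial : ℝ))
      (y₀ := 0)
    · intro n y _
      exact ((hasDerivAt_pow n y).const_mul (α ^ (n * (n - 1) / 2))).div_const _
    · intro n y hy
      have hyR : |y| ≤ R := by
        rw [Metric.mem_ball, Real.dist_eq, sub_zero] at hy
        exact hy.le
      exact deriv_term_bound α R hα hα1 y hRpos.le hyR n
    · simpa [Real.dist_eq] using hRpos
    · exact Ea_summable α hα hα1 0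
    · simpa [Real.dist_eq] using hxR
  have hsum_eq : (∑' n : ℕ, α ^ (n * (n - 1) / 2) * ((n : ℝ) * x ^ (n - 1)) / (n.factorial : ℝ))
      = Ea α (α * x) := by
    have hs : Summable (fun n : ℕ =>
        α ^ (n * (n - 1) / 2) * ((n : ℝ) * x ^ (n - 1)) / (n.factorial : ℝ)) := by
      apply Summable.of_norm_bounded hu_sum
      intro n
      exact deriv_term_bound α R hα hα1 x hRpos.le hxR.le n
    rw [Summable.tsum_eq_zero_add hs]
    simp only [Nat.cast_zero, zero_mul, mul_zero, zero_div, zero_add]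
    unfold Ea
    apply tsum_congr
    intro n
    have htri : (n + 1) * (n + 1 - 1) / 2 = n * (n - 1) / 2 + n := Nat.triangle_succ n
    have hfac : ((n + 1).factorial : ℝ) = (n + 1) * (n.factorial : ℝ) := by
      rw [Nat.factorial_succ]; push_cast; ring
    have hn : (0:ℝ) < n.factorial := by positivity
    rw [htri, hfac, pow_add, Nat.add_sub_cancel, mul_pow]
    push_cast
    field_simp
  rw [← hsum_eq]
  exact key

/-- For a natural number `k` and constants `β, q, c`, the function
`y(x) = c E_α(βx) + (q/(k+1)) x^{k+1} E_α(α^{k+1} β x)` solves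
`y'(x) = β y(αx) + q x^k E_α(β α^{k+1} x)`. -/
theorem nonhomogeneous_power_solution (α β q c : ℝ) (k : ℕ) (hα : 0 < α) (hα1 : α < 1) :
    let y : ℝ → ℝ := fun x =>
      c * Ea α (β * x) + q / (k + 1) * x ^ (k + 1) * Ea α (α ^ (k + 1) * β * x)
    ∀ x : ℝ, HasDerivAt y (β * y (α * x) + q * x ^ k * Ea α (β * α ^ (k + 1) * x)) x := by
  intro y x
  have hle : α ≤ 1 := hα1.le
  -- derivative of first summand
  have hlin : HasDerivAt (fun z : ℝ => β * z) β x := by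
    simpa using (hasDerivAt_id x).const_mul β
  have h1 : HasDerivAt (fun z : ℝ => c * Ea α (β * z))
      (c * (Ea α (α * (β * x)) * β)) x :=
    (((Ea_hasDerivAt α hα hle (β * x)).comp x hlin)).const_mul c
  -- derivative of second summand
  have hlin2 : HasDerivAt (fun z : ℝ => α ^ (k + 1) * β * z) (α ^ (k + 1) * β) x := by
    simpa using (hasDerivAt_id x).const_mul (α ^ (k + 1) * β)
  have hE2 : HasDerivAt (fun z : ℝ => Ea α (α ^ (k + 1) * β * z))
      (Ea α (α * (α ^ (k + 1) * β * x)) * (α ^ (k + 1) * β)) x :=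
    (Ea_hasDerivAt α hα hle (α ^ (k + 1) * β * x)).comp x hlin2
  have hpow : HasDerivAt (fun z : ℝ => q / (k + 1) * z ^ (k + 1))
      (q / (k + 1) * ((k + 1) * x ^ k)) x := by
    simpa using (hasDerivAt_pow (k + 1) x).const_mul (q / (k + 1))
  have h2 : HasDerivAt (fun z : ℝ => q / (k + 1) * z ^ (k + 1) * Ea α (α ^ (k + 1) * β * z))
      (q / (k + 1) * ((k + 1) * x ^ k) * Ea α (α ^ (k + 1) * β * x)
        + q / (k + 1) * x ^ (k + 1) * (Ea α (α * (α ^ (k + 1) * β * x)) * (α ^ (k + 1) * β))) x :=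
    hpow.mul hE2
  have h := h1.add h2
  refine h.congr_deriv ?_
  have hk : ((k : ℝ) + 1) ≠ 0 := by positivity
  have e1 : β * (α * x) = α * (β * x) := by ring
  have e2 : α ^ (k + 1) * β * (α * x) = α * (α ^ (k + 1) * β * x) := by ring
  have e3 : β * α ^ (k + 1) * x = α ^ (k + 1) * β * x := by ring
  simp only [y, e1, e2, e3]
  field_simp
  ring
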